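/- Let d ≥ 1 be an integer, r > 0, t ∈ (0,1), let 𝒳 be a standard Borel space, let I be a finite index set, and for each i ∈ I let κ_i and η_i be Markov kernels from [0, r] to 𝒳 such that for Lebesgue-almost every y ∈ [0, r], κ_i(y) ≠ η_i(y). Then for every ε > 0 and every V > 0 there exists γ > 0 such that for every Lebesgue-measurable set A contained in the closed Euclidean ball B(0, r) ⊆ ℝ^d with vol(A) ≥ V, the d-dimensional Lebesgue measure of the set {x ∈ A : φ_t(κ_i(‖x‖), η_i(‖x‖)) ≥ 1 − γ for some i ∈ I} is at most ε · vol(A). In particular, γ depends on A only through a lower bound on its volume. -/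

import Mathlib

/-!
Weighted AM–GM, `x ^ t ≤ t x + (1 - t)` with equality only at `x = 1`, applied to `x = dP/dQ` and
integrated against `Q`, gives `φ_t(P, Q) < 1` whenever `P ≠ Q`. Hence for each `i` the radii
`y ∈ [0, r]` with `φ_t(κ_i y, η_i y) ≥ 1 - γ` shrink, as `γ ↓ 0`, to a Lebesgue-null set. In polar
coordinates Lebesgue measure on `ℝ^d` has radial density `y ^ (d - 1)`, so the norm maps Lebesgue
measure to a measure absolutely continuous w.r.t. Lebesgue measure on `ℝ`, and the points of the
ball with such radii also have volume tending to `0`. Choosing `γ` so that this volume is below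
`ε V` works for every `A` with `vol A ≥ V`.
-/

open MeasureTheory

/-- The Hellinger-type integral `φ_t(P,Q) = ∫ (dP/dQ)^t dQ`. -/
noncomputable def phiT {𝒳 : Type*} [MeasurableSpace 𝒳] (t : ℝ) (P Q : Measure 𝒳) : ℝ :=
  ∫ x, (P.rnDeriv Q x).toReal ^ t ∂Q

open Filter Set Topology ProbabilityTheory
open scoped ENNReal

namespace Real

lemma rpow_le_mul_add_one_sub {t x : ℝ} (ht₀ : 0 ≤ t) (ht₁ : t ≤ 1) (hx : 0 ≤ x) :
    x ^ t ≤ t * x + (1 - t) := by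
  simpa using geom_mean_le_arith_mean2_weighted ht₀ (sub_nonneg.2 ht₁) hx zero_le_one
    (add_sub_cancel t 1)

lemma rpow_lt_mul_add_one_sub {t x : ℝ} (ht₀ : 0 < t) (ht₁ : t < 1) (hx : 0 ≤ x) (hx₁ : x ≠ 1) :
    x ^ t < t * x + (1 - t) := by
  have := rpow_one_add_lt_one_add_mul_self (s := x - 1) (by linarith) (sub_ne_zero.2 hx₁) ht₀ ht₁
  rw [add_sub_cancel] at this
  linarith

end Real

section Hellinger

variable {𝒳 : Type*} [MeasurableSpace 𝒳]

lemma integrable_toReal_rnDeriv_rpow {t : ℝ} (ht₀ : 0 ≤ t) (ht₁ : t ≤ 1) (P Q : Measure 𝒳)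
    [IsFiniteMeasure P] [IsFiniteMeasure Q] :
    Integrable (fun x ↦ (P.rnDeriv Q x).toReal ^ t) Q := by
  have hlin : Integrable (fun x ↦ t * (P.rnDeriv Q x).toReal + (1 - t)) Q :=
    (Measure.integrable_toReal_rnDeriv.const_mul t).add (integrable_const (1 - t))
  refine hlin.mono
    ((Measure.measurable_rnDeriv P Q).ennreal_toReal.pow_const t).aestronglyMeasurable
    (.of_forall fun x ↦ ?_)
  have hx : 0 ≤ (P.rnDeriv Q x).toReal := ENNReal.toReal_nonneg
  rw [Real.norm_of_nonneg (Real.rpow_nonneg hx t)]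
  exact (Real.rpow_le_mul_add_one_sub ht₀ ht₁ hx).trans (Real.le_norm_self _)

lemma Measure.eq_of_toReal_rnDeriv_ae_eq_one {P Q : Measure 𝒳} [IsProbabilityMeasure P]
    [IsProbabilityMeasure Q] (h : ∀ᵐ x ∂Q, (P.rnDeriv Q x).toReal = 1) : P = Q := by
  have hrn : P.rnDeriv Q =ᵐ[Q] 1 := by
    filter_upwards [h] with x hx
    exact (ENNReal.toReal_eq_one_iff _).mp hx
  have hQ : Q.withDensity (P.rnDeriv Q) = Q := by
    rw [withDensity_congr_ae hrn, withDensity_one]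
  exact (Measure.eq_of_le_of_measure_univ_eq (hQ ▸ P.withDensity_rnDeriv_le Q) (by simp)).symm

lemma phiT_lt_one {t : ℝ} (ht₀ : 0 < t) (ht₁ : t < 1) {P Q : Measure 𝒳} [IsProbabilityMeasure P]
    [IsProbabilityMeasure Q] (hPQ : P ≠ Q) : phiT t P Q < 1 := by
  set f : 𝒳 → ℝ := fun x ↦ (P.rnDeriv Q x).toReal
  have hf_nonneg : ∀ x, 0 ≤ f x := fun x ↦ ENNReal.toReal_nonneg
  have hf_int : Integrable f Q := Measure.integrable_toReal_rnDeriv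
  have hft_int : Integrable (fun x ↦ f x ^ t) Q :=
    integrable_toReal_rnDeriv_rpow ht₀.le ht₁.le P Q
  have hf_le : ∫ x, f x ∂Q ≤ 1 := by
    have := Measure.integral_toReal_rnDeriv' (μ := P) (ν := Q)
    simp only [probReal_univ] at this
    linarith [measureReal_nonneg (μ := P.singularPart Q) (s := univ)]
  set g : 𝒳 → ℝ := fun x ↦ t * f x + (1 - t) - f x ^ t
  have hg_nonneg : ∀ x, 0 ≤ g x := fun x ↦
    sub_nonneg.2 (Real.rpow_le_mul_add_one_sub ht₀.le ht₁.le (hf_nonneg x))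
  have hlin_int : Integrable (fun x ↦ t * f x + (1 - t)) Q :=
    (hf_int.const_mul t).add (integrable_const (1 - t))
  have hg_int : Integrable g Q := hlin_int.sub hft_int
  have hg_integral : ∫ x, g x ∂Q = t * ∫ x, f x ∂Q + (1 - t) - phiT t P Q := by
    rw [integral_sub hlin_int hft_int,
      integral_add (hf_int.const_mul t) (integrable_const _), integral_const_mul]
    simp [phiT, f]
  by_contra! hφ
  have hg_zero : g =ᵐ[Q] 0 := by
    refine (integral_eq_zero_iff_of_nonneg hg_nonneg hg_int).mp (le_antisymm ?_
      (integral_nonneg hg_nonneg))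
    rw [hg_integral]
    nlinarith
  refine hPQ (Measure.eq_of_toReal_rnDeriv_ae_eq_one ?_)
  filter_upwards [hg_zero] with x hx
  by_contra hx₁
  have := Real.rpow_lt_mul_add_one_sub ht₀ ht₁ (hf_nonneg x) hx₁
  simp only [g, Pi.zero_apply] at hx
  linarith

lemma measurable_phiT_kernel {α : Type*} [MeasurableSpace α]
    [MeasurableSpace.CountableOrCountablyGenerated α 𝒳] (t : ℝ) (κ η : Kernel α 𝒳)
    [IsFiniteKernel κ] [IsFiniteKernel η] :
    Measurable fun a ↦ phiT t (κ a) (η a) := by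
  have hmeas : StronglyMeasurable fun p : α × 𝒳 ↦ (Kernel.rnDeriv κ η p.1 p.2).toReal ^ t :=
    ((Kernel.measurable_rnDeriv κ η).ennreal_toReal.pow_const t).stronglyMeasurable
  convert (hmeas.integral_kernel_prod_right' (κ := η)).measurable using 2 with a
  refine integral_congr_ae ?_
  filter_upwards [Kernel.rnDeriv_eq_rnDeriv_measure (κ := κ) (η := η) (a := a)] with x hx
  rw [hx]

end Hellinger

lemma tendsto_measure_inter_sub_le_nhdsGT_zero {α : Type*} [MeasurableSpace α] {μ : Measure α}
    {s : Set α} {f : α → ℝ} {c : ℝ} (hs : MeasurableSet s) (hμs : μ s ≠ ∞) (hf : Measurable f)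
    (hlt : ∀ᵐ x ∂μ.restrict s, f x < c) :
    Tendsto (fun γ ↦ μ (s ∩ {x | c - γ ≤ f x})) (𝓝[>] 0) (𝓝 0) := by
  have hlim := tendsto_measure_biInter_gt (μ := μ) (s := fun γ ↦ s ∩ {x | c - γ ≤ f x}) (a := 0)
    (fun γ _ ↦ (hs.inter (measurableSet_le measurable_const hf)).nullMeasurableSet)
    (fun γ γ' _ hγγ' ↦ inter_subset_inter_right _ fun x (hx : c - γ ≤ f x) ↦
      show c - γ' ≤ f x by linarith)
    ⟨1, one_pos, measure_ne_top_of_subset inter_subset_left hμs⟩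
  have hinter : ⋂ γ > (0 : ℝ), s ∩ {x | c - γ ≤ f x} = s ∩ {x | c ≤ f x} := by
    ext x
    simp only [mem_iInter, mem_inter_iff, mem_ofPred_eq]
    refine ⟨fun h ↦ ⟨(h 1 one_pos).1, le_of_forall_pos_le_add fun γ hγ ↦ ?_⟩,
      fun h γ hγ ↦ ⟨h.1, by linarith [h.2]⟩⟩
    linarith [(h γ hγ).2]
  have hnull : μ (s ∩ {x | c ≤ f x}) = 0 := by
    rw [ae_iff, Measure.restrict_apply' hs] at hlt
    simpa [inter_comm] using hlt
  rwa [Function.comp_def, hinter, hnull] at hlim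

section RadialMeasure

variable {E : Type*} [NormedAddCommGroup E] [NormedSpace ℝ E] [FiniteDimensional ℝ E]
  [MeasurableSpace E] [BorelSpace E] [Nontrivial E] (μ : Measure E) [μ.IsAddHaarMeasure]

lemma quasiMeasurePreserving_norm : Measure.QuasiMeasurePreserving (‖·‖ : E → ℝ) μ volume := by
  refine ⟨measurable_norm, Measure.AbsolutelyContinuous.mk fun B hB hB₀ ↦ ?_⟩
  rw [Measure.map_apply measurable_norm hB]
  have hrad : (fun y : ℝ ↦ y ^ (Module.finrank ℝ E - 1) • B.indicator (1 : ℝ → ℝ) y)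
      =ᵐ[volume.restrict (Ioi 0)] 0 :=
    ae_restrict_of_ae <| (indicator_meas_zero (f := (1 : ℝ → ℝ)) hB₀).mono fun y hy ↦ by
      simp only [Pi.zero_apply] at hy ⊢
      rw [hy, smul_zero]
  have hint : Integrable (fun x : E ↦ B.indicator (1 : ℝ → ℝ) ‖x‖) μ :=
    (integrable_fun_norm_addHaar μ).2 ((integrable_zero _ _ _).congr hrad.symm)
  have hzero : ∫ x, B.indicator (1 : ℝ → ℝ) ‖x‖ ∂μ = 0 := by
    rw [integral_fun_norm_addHaar, integral_congr_ae hrad]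
    simp
  have hae := (integral_eq_zero_iff_of_nonneg (fun x ↦ indicator_nonneg (by simp) _) hint).1 hzero
  rw [EventuallyEq, ae_iff] at hae
  simpa [indicator, preimage] using hae

lemma ae_restrict_closedBall_comp_norm {p : ℝ → Prop} {r : ℝ}
    (h : ∀ᵐ y ∂volume.restrict (Icc 0 r), p y) :
    ∀ᵐ x ∂μ.restrict (Metric.closedBall (0 : E) r), p ‖x‖ := by
  rw [ae_restrict_iff' measurableSet_Icc] at h
  rw [ae_restrict_iff' measurableSet_closedBall]
  filter_upwards [(quasiMeasurePreserving_norm μ).ae h] with x hx hxr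
  exact hx ⟨norm_nonneg x, mem_closedBall_zero_iff.1 hxr⟩

end RadialMeasure

theorem stmt_3_general {𝒳 : Type*} [MeasurableSpace 𝒳] [StandardBorelSpace 𝒳]
    (d : ℕ) (hd : 1 ≤ d) (r t : ℝ) (ht : t ∈ Set.Ioo (0 : ℝ) 1)
    {I : Type*} [Fintype I]
    (κ η : I → ProbabilityTheory.Kernel ℝ 𝒳)
    [∀ i, ProbabilityTheory.IsMarkovKernel (κ i)]
    [∀ i, ProbabilityTheory.IsMarkovKernel (η i)]
    (hne : ∀ i, ∀ᵐ y ∂(volume.restrict (Set.Icc (0 : ℝ) r)), κ i y ≠ η i y) :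
    ∀ ε : ℝ, 0 < ε → ∀ V : ℝ, 0 < V → ∃ γ : ℝ, 0 < γ ∧
      ∀ A : Set (EuclideanSpace ℝ (Fin d)), MeasurableSet A →
        A ⊆ Metric.closedBall 0 r → ENNReal.ofReal V ≤ volume A →
        volume {x ∈ A | ∃ i, 1 - γ ≤ phiT t (κ i ‖x‖) (η i ‖x‖)}
          ≤ ENNReal.ofReal ε * volume A := by
  intro ε hε V hV
  have : Nontrivial (EuclideanSpace ℝ (Fin d)) := by
    have : Nonempty (Fin d) := Fin.pos_iff_nonempty.mp hd
    infer_instance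
  set bad : I → ℝ → Set (EuclideanSpace ℝ (Fin d)) :=
    fun i γ ↦ Metric.closedBall 0 r ∩ {x | 1 - γ ≤ phiT t (κ i ‖x‖) (η i ‖x‖)}
  have hbad : Tendsto (fun γ ↦ ∑ i, volume (bad i γ)) (𝓝[>] 0) (𝓝 0) := by
    have hlt : ∀ i, ∀ᵐ x ∂volume.restrict (Metric.closedBall (0 : EuclideanSpace ℝ (Fin d)) r),
        phiT t (κ i ‖x‖) (η i ‖x‖) < 1 := fun i ↦
      ae_restrict_closedBall_comp_norm volume ((hne i).mono fun y hy ↦ phiT_lt_one ht.1 ht.2 hy)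
    simpa only [Finset.sum_const_zero, Function.comp_def] using
      tendsto_finsetSum Finset.univ fun i _ ↦ tendsto_measure_inter_sub_le_nhdsGT_zero
        measurableSet_closedBall measure_closedBall_lt_top.ne
        ((measurable_phiT_kernel t (κ i) (η i)).comp measurable_norm) (hlt i)
  have hεV : 0 < ENNReal.ofReal (ε * V) := ENNReal.ofReal_pos.2 (by positivity)
  obtain ⟨γ, hγ, hγ₀⟩ :=
    ((hbad.eventually (gt_mem_nhds hεV)).and self_mem_nhdsWithin).exists
  refine ⟨γ, hγ₀, fun A _ hAr hAV ↦ ?_⟩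
  calc volume {x ∈ A | ∃ i, 1 - γ ≤ phiT t (κ i ‖x‖) (η i ‖x‖)}
      ≤ volume (⋃ i, bad i γ) :=
        measure_mono fun x ⟨hxA, i, hi⟩ ↦ mem_iUnion.2 ⟨i, hAr hxA, hi⟩
    _ ≤ ∑ i, volume (bad i γ) := measure_iUnion_fintype_le _ _
    _ ≤ ENNReal.ofReal ε * ENNReal.ofReal V := by rw [← ENNReal.ofReal_mul hε.le]; exact hγ.le
    _ ≤ ENNReal.ofReal ε * volume A := by gcongr

/-- Corollary 1 (distinguishing vertices): if for each `i` in a finite index set the Markov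
kernels `κ i` and `η i` from `[0,r]` satisfy `κ i y ≠ η i y` for Lebesgue-a.e. `y ∈ [0,r]`,
then for all `ε > 0` and `V > 0`, there is `γ > 0` such that for every measurable
`A ⊆ B(0,r) ⊆ ℝ^d` of volume at least `V`, the set of points `x ∈ A` where some
`φ_t(κ i ‖x‖, η i ‖x‖) ≥ 1 - γ` has volume at most `ε · vol(A)`. -/
theorem stmt_3 {𝒳 : Type*} [MeasurableSpace 𝒳] [StandardBorelSpace 𝒳]
    (d : ℕ) (hd : 1 ≤ d) (r t : ℝ) (hr : 0 < r) (ht : t ∈ Set.Ioo (0 : ℝ) 1)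
    {I : Type*} [Fintype I]
    (κ η : I → ProbabilityTheory.Kernel ℝ 𝒳)
    [∀ i, ProbabilityTheory.IsMarkovKernel (κ i)]
    [∀ i, ProbabilityTheory.IsMarkovKernel (η i)]
    (hne : ∀ i, ∀ᵐ y ∂(volume.restrict (Set.Icc (0 : ℝ) r)), κ i y ≠ η i y) :
    ∀ ε : ℝ, 0 < ε → ∀ V : ℝ, 0 < V → ∃ γ : ℝ, 0 < γ ∧
      ∀ A : Set (EuclideanSpace ℝ (Fin d)), MeasurableSet A →
        A ⊆ Metric.closedBall 0 r → ENNReal.ofReal V ≤ volume A →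
        volume {x ∈ A | ∃ i, 1 - γ ≤ phiT t (κ i ‖x‖) (η i ‖x‖)}
          ≤ ENNReal.ofReal ε * volume A :=
  stmt_3_general d hd r t ht κ η hne
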